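/- Let Z ⊆ ℝ^n be convex, F : Z → ℝ^n, and D a Bregman divergence over a differentiable convex 1-strongly-convex function d with respect to a norm ‖·‖. Fix t, and suppose ẑ_t, z_t, z_{t+1} ∈ Z and γ_t > 0 satisfy: (i) γ_t⟨G, ẑ_t − z⟩ ≤ D(z, z_t) − D(z, ẑ_t) − D(ẑ_t, z_t) for all z ∈ Z, where G ∈ ℝ^n; (ii) γ_t⟨F(ẑ_t), z_{t+1} − z⟩ ≤ D(z, z_t) − D(z, z_{t+1}) − D(z_{t+1}, z_t) for all z ∈ Z; (iii) ‖F(ẑ_t) − G‖_* ≤ (L_p/p!)‖ẑ_t − z_t‖^p; and (iv) γ_t ≤ p!/(16 L_p ‖ẑ_t − z_t‖^{p−1}). Then for all z ∈ Z: γ_t⟨F(ẑ_t), ẑ_t − z⟩ + (1/4)‖ẑ_t − z_t‖² + (1/4)‖z_{t+1} − ẑ_t‖² ≤ D(z, z_t) − D(z, z_{t+1}). -/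

import Mathlib

/-!
Write `A = N (ẑ - z_t)`, `M = N (ẑ - z_{t+1})` and `c = γ · Ndual (F ẑ - G)`. Adding the two
prox inequalities (ii) at `z` and (i) at `z_{t+1}` bounds `γ⟪F ẑ, ẑ - z⟫ + D(z_{t+1}, ẑ) + D(ẑ, z_t)`
by `γ⟪F ẑ - G, ẑ - z_{t+1}⟫ + D(z, z_t) - D(z, z_{t+1})`, and Hölder bounds the error term by `c M`.
The step-size condition (iv) together with (iii) gives `c ≤ A / 16`, and the same sum at `z = ẑ`
gives `M² / 2 ≤ c M`, so `c M ≤ 2 c² ≤ A² / 4`; strong convexity turns the two divergences into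
`A² / 2 + N (z_{t+1} - ẑ)² / 2`, which leaves the claimed quarter of each.
-/

open scoped RealInnerProductSpace Nat

lemma mul_le_div_sixteen_of_le_factorial_div {p : ℕ} (hp : 1 ≤ p) {L γ A e : ℝ} (hL : 0 < L)
    (hγ : 0 < γ) (hA : 0 ≤ A) (he : e ≤ L / p ! * A ^ p)
    (hγA : γ ≤ p ! / (16 * L * A ^ (p - 1))) :
    γ * e ≤ A / 16 := by
  have hfact : (0 : ℝ) < p ! := mod_cast p.factorial_pos
  have hpow : 0 < A ^ (p - 1) := by
    refine (pow_nonneg hA _).lt_of_ne fun h ↦ ?_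
    rw [← h, mul_zero, div_zero] at hγA
    linarith
  have hγA' : γ * (16 * L * A ^ (p - 1)) / p ! ≤ 1 := by
    rw [div_le_one hfact, ← le_div_iff₀ (by positivity)]
    exact hγA
  calc γ * e ≤ γ * (L / p ! * A ^ p) := mul_le_mul_of_nonneg_left he hγ.le
    _ = γ * (16 * L * A ^ (p - 1)) / p ! * (A / 16) := by
      rw [← Nat.sub_add_cancel hp, pow_succ, Nat.add_sub_cancel]
      field_simp
    _ ≤ A / 16 := mul_le_of_le_one_left (by positivity) hγA'

lemma mul_le_sq_div_four_of_sq_le_mul {c M A : ℝ} (hM : 0 ≤ M) (hMc : M ^ 2 / 2 ≤ c * M)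
    (hc : c ≤ A / 16) : c * M ≤ A ^ 2 / 4 := by
  rcases le_or_gt c 0 with hc0 | hc0
  · nlinarith [sq_nonneg A]
  have hM2c : M ≤ 2 * c := by nlinarith
  nlinarith

lemma inner_sub_eq_add_add {E : Type*} [NormedAddCommGroup E] [InnerProductSpace ℝ E]
    (f g x y z : E) : ⟪f, x - z⟫ = ⟪f - g, x - y⟫ + ⟪g, x - y⟫ + ⟪f, y - z⟫ := by
  simp only [inner_sub_left, inner_sub_right]
  ring

lemma inner_add_bregman_le_of_prox {E : Type*} [NormedAddCommGroup E] [InnerProductSpace ℝ E]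
    (D : E → E → ℝ) {γ : ℝ} {f g zhat zt zt1 z : E}
    (hG : γ * ⟪g, zhat - zt1⟫ ≤ D zt1 zt - D zt1 zhat - D zhat zt)
    (hF : γ * ⟪f, zt1 - z⟫ ≤ D z zt - D z zt1 - D zt1 zt) :
    γ * ⟪f, zhat - z⟫ + D zt1 zhat + D zhat zt ≤ γ * ⟪f - g, zhat - zt1⟫ + D z zt - D z zt1 := by
  rw [inner_sub_eq_add_add f g zhat zt1 z]
  linarith

theorem stmt15_general {n : ℕ} (Z : Set (EuclideanSpace ℝ (Fin n)))
    (F : EuclideanSpace ℝ (Fin n) → EuclideanSpace ℝ (Fin n))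
    (N Ndual : EuclideanSpace ℝ (Fin n) → ℝ)
    (hN : ∀ x, 0 ≤ N x)
    (hHolder : ∀ a b, ⟪a, b⟫ ≤ Ndual a * N b)
    (D : EuclideanSpace ℝ (Fin n) → EuclideanSpace ℝ (Fin n) → ℝ)
    (hstrong : ∀ u v, (1 / 2) * N (u - v) ^ 2 ≤ D u v)
    (p : ℕ) (hp : 1 ≤ p) (L : ℝ) (hL : 0 < L) (γ : ℝ) (hγ : 0 < γ)
    (zhat zt zt1 : EuclideanSpace ℝ (Fin n))
    (hzhat : zhat ∈ Z) (hzt1 : zt1 ∈ Z)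
    (G : EuclideanSpace ℝ (Fin n))
    (h1 : ∀ z ∈ Z, γ * ⟪G, zhat - z⟫ ≤ D z zt - D z zhat - D zhat zt)
    (h2 : ∀ z ∈ Z, γ * ⟪F zhat, zt1 - z⟫ ≤ D z zt - D z zt1 - D zt1 zt)
    (h3 : Ndual (F zhat - G) ≤ (L / (p.factorial : ℝ)) * N (zhat - zt) ^ p)
    (h4 : γ ≤ (p.factorial : ℝ) / (16 * L * N (zhat - zt) ^ (p - 1))) :
    ∀ z ∈ Z,
      γ * ⟪F zhat, zhat - z⟫ + (1 / 4) * N (zhat - zt) ^ 2 + (1 / 4) * N (zt1 - zhat) ^ 2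
        ≤ D z zt - D z zt1 := by
  intro z hz
  have hc := mul_le_div_sixteen_of_le_factorial_div hp hL hγ (hN _) h3 h4
  have hHolder' : γ * ⟪F zhat - G, zhat - zt1⟫ ≤ γ * Ndual (F zhat - G) * N (zhat - zt1) := by
    rw [mul_assoc]
    exact mul_le_mul_of_nonneg_left (hHolder _ _) hγ.le
  -- `N` need not be symmetric: Hölder controls `N (ẑ - z_{t+1})`, not the `N (z_{t+1} - ẑ)` of
  -- the claim, so the former is bounded separately by the step at `z = ẑ`.
  have hM : N (zhat - zt1) ^ 2 / 2 ≤ γ * Ndual (F zhat - G) * N (zhat - zt1) := by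
    have hstep := inner_add_bregman_le_of_prox D (h1 zt1 hzt1) (h2 zhat hzhat)
    rw [sub_self, inner_zero_right, mul_zero] at hstep
    linarith [hstrong zhat zt1, hstrong zt1 zhat, sq_nonneg (N (zt1 - zhat))]
  have hcM := mul_le_sq_div_four_of_sq_le_mul (hN _) hM hc
  have hmain := inner_add_bregman_le_of_prox D (h1 zt1 hzt1) (h2 z hz)
  linarith [hstrong zt1 zhat, hstrong zhat zt, sq_nonneg (N (zt1 - zhat))]

/-- Per-step inequality of HigherOrderMirrorProx. Here `N` is a norm on `ℝⁿ` (with dual norm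
`Ndual`, encoded through nonnegativity and Hölder's inequality `⟪a,b⟫ ≤ Ndual a · N b`), and
`D` is the Bregman divergence of a `1`-strongly-convex (w.r.t. `N`) differentiable convex `d`,
encoded by `D u v = d u − d v − ⟪∇d v, u − v⟫` and `D u v ≥ ½ N(u−v)²`. `G` plays the role of
the Taylor approximation `T_{p−1}(ẑ_t; z_t)`. -/
theorem stmt15 {n : ℕ} (Z : Set (EuclideanSpace ℝ (Fin n))) (hZ : Convex ℝ Z)
    (F : EuclideanSpace ℝ (Fin n) → EuclideanSpace ℝ (Fin n))
    (N Ndual : EuclideanSpace ℝ (Fin n) → ℝ)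
    (hN : ∀ x, 0 ≤ N x) (hNdual : ∀ x, 0 ≤ Ndual x)
    (hHolder : ∀ a b, ⟪a, b⟫ ≤ Ndual a * N b)
    (d : EuclideanSpace ℝ (Fin n) → ℝ) (hdconv : ConvexOn ℝ Z d)
    (Gd : EuclideanSpace ℝ (Fin n) → EuclideanSpace ℝ (Fin n))
    (hGd : ∀ z ∈ Z, HasGradientAt d (Gd z) z)
    (D : EuclideanSpace ℝ (Fin n) → EuclideanSpace ℝ (Fin n) → ℝ)
    (hD : ∀ u v, D u v = d u - d v - ⟪Gd v, u - v⟫)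
    (hstrong : ∀ u v, (1 / 2) * N (u - v) ^ 2 ≤ D u v)
    (p : ℕ) (hp : 1 ≤ p) (L : ℝ) (hL : 0 < L) (γ : ℝ) (hγ : 0 < γ)
    (zhat zt zt1 : EuclideanSpace ℝ (Fin n))
    (hzhat : zhat ∈ Z) (hzt : zt ∈ Z) (hzt1 : zt1 ∈ Z)
    (G : EuclideanSpace ℝ (Fin n))
    (h1 : ∀ z ∈ Z, γ * ⟪G, zhat - z⟫ ≤ D z zt - D z zhat - D zhat zt)
    (h2 : ∀ z ∈ Z, γ * ⟪F zhat, zt1 - z⟫ ≤ D z zt - D z zt1 - D zt1 zt)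
    (h3 : Ndual (F zhat - G) ≤ (L / (p.factorial : ℝ)) * N (zhat - zt) ^ p)
    (h4 : γ ≤ (p.factorial : ℝ) / (16 * L * N (zhat - zt) ^ (p - 1))) :
    ∀ z ∈ Z,
      γ * ⟪F zhat, zhat - z⟫ + (1 / 4) * N (zhat - zt) ^ 2 + (1 / 4) * N (zt1 - zhat) ^ 2
        ≤ D z zt - D z zt1 :=
  stmt15_general Z F N Ndual hN hHolder D hstrong p hp L hL γ hγ zhat zt zt1 hzhat hzt1 G h1 h2 h3
    h4
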